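/- Let S be a string with labels ℓ. For any pattern P = c₁c₂⋯c_m and interval [a,b], the count |{i : P occurs at i in S, ℓ(i) ∈ [a,b]}| can be computed by m iterated rank computations: defining I₀ = the interval of positions of S_ε (= S sorted by label) with labels in [a,b], and I_k = the interval of occurrences of c_k inside I_{k−1} within S_{c₁⋯c_{k−1}}, the length of I_m equals the desired count. -/

import Mathlib

def occursAt {α : Type*} (S P : List α) (i : ℕ) : Prop := P <+: S.drop i

instance {α : Type*} [DecidableEq α] (S P : List α) (i : ℕ) : Decidable (occursAt S P i) :=
  inferInstanceAs (Decidable (P <+: S.drop i))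

/-- The starting positions of occurrences of `w` in `S`, stably sorted by label. -/
def sortedOcc {α : Type*} [DecidableEq α] (S : List α) (ℓ : ℕ → ℕ) (w : List α) : List ℕ :=
  ((List.range S.length).filter (fun i => decide (occursAt S w i))).mergeSort
    (fun i j => decide (ℓ i < ℓ j ∨ (ℓ i = ℓ j ∧ i ≤ j)))

/-- `S_w`: the characters following occurrences of `w` in `S` (the sentinel `d` when the
occurrence reaches the end of `S`), listed sorted by the labels of those occurrences. -/
def Sw {α : Type*} [DecidableEq α] (S : List α) (ℓ : ℕ → ℕ) (d : α) (w : List α) : List α :=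
  (sortedOcc S ℓ w).map (fun i => S.getD (i + w.length) d)

/-- `rankc T c j` counts the occurrences of `c` among the first `j` characters of `T`. -/
def rankc {α : Type*} [DecidableEq α] (T : List α) (c : α) (j : ℕ) : ℕ :=
  ((T.take j).filter (fun x => decide (x = c))).length

/-- The iterated rank computation: starting from an interval of `S_ε` and descending
character by character, at each step mapping the interval by two rank queries. -/
def iter {α : Type*} [DecidableEq α] (S : List α) (ℓ : ℕ → ℕ) (d : α) :
    List α → List α → ℕ × ℕ → ℕ × ℕ
  | _, [], p => p
  | w, c :: rest, (lo, hi) =>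
      iter S ℓ d (w ++ [c]) rest (rankc (Sw S ℓ d w) c lo, rankc (Sw S ℓ d w) c hi)

/-! Write `N_w(t)` for the number of occurrences of `w` with label `< t`. Since `S_w` lists the
occurrences of `w` sorted by label, its first `N_w(t)` entries are exactly those with label `< t`,
and the ones among them followed by `c` are the occurrences of `w c` with label `< t`; hence
`rank_c(S_w, N_w(t)) = N_{wc}(t)`. Starting from `I₀ = [N_ε(a), N_ε(b+1))`, induction gives
`I_m = [N_P(a), N_P(b+1))`, whose length is the number of occurrences of `P` with label in
`[a, b]`. The sentinel `d ∉ P` keeps an occurrence that runs off the end of `S` from being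
counted as followed by a character of `P`. -/

theorem List.append_singleton_prefix_iff {α : Type*} {w L : List α} {c : α} :
    w ++ [c] <+: L ↔ w <+: L ∧ L[w.length]? = some c := by
  simp only [List.prefix_iff_getElem?, List.length_append, List.length_singleton,
    Nat.forall_lt_succ_right']
  exact and_congr (forall₂_congr fun i hi => by simp [List.getElem_append_left hi]) (by simp)

theorem Finset.card_filter_lt_sub_card_filter_lt {β γ : Type*} [LinearOrder γ] (A : Finset β)
    (f : β → γ) (s t : γ) :
    (A.filter (f · < t)).card - (A.filter (f · < s)).card
      = (A.filter fun x => s ≤ f x ∧ f x < t).card := by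
  classical
  by_cases hst : s ≤ t
  · have hsub : A.filter (f · < s) ⊆ A.filter (f · < t) :=
      Finset.monotone_filter_right A fun _ _ h => h.trans_le hst
    rw [← Finset.card_sdiff_of_subset hsub]
    congr 1
    ext x
    simp only [Finset.mem_sdiff, Finset.mem_filter, not_and, not_lt]
    tauto
  · have hempty : A.filter (fun x => s ≤ f x ∧ f x < t) = ∅ :=
      Finset.filter_false_of_mem fun x _ h => hst (h.1.trans h.2.le)
    rw [hempty, Finset.card_empty, Nat.sub_eq_zero_iff_le]
    exact Finset.card_le_card (Finset.monotone_filter_right A fun _ _ h => h.trans (not_le.mp hst))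

theorem List.take_countP_eq_filter {β : Type*} {L : List β} {p : β → Bool}
    (h : L.Pairwise fun a b => p b → p a) : L.take (L.countP p) = L.filter p := by
  induction L with
  | nil => rfl
  | cons x L ih =>
    obtain ⟨hx, hL⟩ := List.pairwise_cons.mp h
    by_cases hpx : p x
    · simp [hpx, ih hL]
    · have : L.filter p = [] := List.filter_eq_nil_iff.mpr fun y hy hpy => hpx (hx y hy hpy)
      simp [hpx, this, List.countP_eq_length_filter]

theorem Finset.card_filter_range_eq_countP {n : ℕ} (q : ℕ → Prop) [DecidablePred q] :
    ((Finset.range n).filter q).card = (List.range n).countP (fun i => decide (q i)) := by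
  rw [List.countP_eq_length_filter]; rfl

theorem occursAt_append_singleton_iff {α : Type*} (S : List α) {w : List α} {c d : α}
    (hc : c ≠ d) (i : ℕ) :
    occursAt S (w ++ [c]) i ↔ occursAt S w i ∧ S.getD (i + w.length) d = c := by
  rw [occursAt, occursAt, List.append_singleton_prefix_iff, List.getElem?_drop,
    List.getD_eq_getElem?_getD]
  cases S[i + w.length]? <;> simp [hc.symm]

section Occurrences

variable {α : Type*} [DecidableEq α] (S : List α) (ℓ : ℕ → ℕ)

def occurrences (w : List α) : Finset ℕ :=
  (Finset.range S.length).filter (occursAt S w)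

theorem occurrences_nil : occurrences S [] = Finset.range S.length :=
  Finset.filter_true_of_mem fun _ _ => List.nil_prefix

theorem sortedOcc_pairwise (w : List α) :
    (sortedOcc S ℓ w).Pairwise (fun i j => ℓ i ≤ ℓ j) := by
  refine (List.pairwise_mergeSort ?_ ?_ _).imp ?_ <;>
    simp only [decide_eq_true_eq, Bool.or_eq_true] <;> omega

theorem countP_sortedOcc (w : List α) (q : ℕ → Prop) [DecidablePred q] :
    (sortedOcc S ℓ w).countP (fun i => decide (q i)) = ((occurrences S w).filter q).card := by
  rw [sortedOcc, (List.mergeSort_perm _ _).countP_eq, List.countP_filter, occurrences,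
    Finset.filter_filter, Finset.card_filter_range_eq_countP]
  exact List.countP_congr fun _ _ => by simp [Bool.and_comm]

def countOccLabelLT (w : List α) (t : ℕ) : ℕ :=
  ((occurrences S w).filter (ℓ · < t)).card

theorem rankc_Sw_countOccLabelLT {w : List α} {c d : α} (hc : c ≠ d) (t : ℕ) :
    rankc (Sw S ℓ d w) c (countOccLabelLT S ℓ w t) = countOccLabelLT S ℓ (w ++ [c]) t := by
  have hprefix : (sortedOcc S ℓ w).take (countOccLabelLT S ℓ w t)
      = (sortedOcc S ℓ w).filter (fun i => decide (ℓ i < t)) := by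
    rw [countOccLabelLT, ← countP_sortedOcc]
    exact List.take_countP_eq_filter <| (sortedOcc_pairwise S ℓ w).imp fun hij hj => by
      simp only [decide_eq_true_eq] at hj ⊢; omega
  rw [rankc, Sw, ← List.map_take, hprefix, ← List.countP_eq_length_filter, List.countP_map,
    List.countP_filter]
  calc _ = (sortedOcc S ℓ w).countP
          (fun i => decide (S.getD (i + w.length) d = c ∧ ℓ i < t)) :=
        List.countP_congr fun _ _ => by simp
    _ = ((occurrences S w).filter fun i => S.getD (i + w.length) d = c ∧ ℓ i < t).card :=
        countP_sortedOcc S ℓ w _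
    _ = countOccLabelLT S ℓ (w ++ [c]) t := by
        simp only [countOccLabelLT, occurrences, Finset.filter_filter,
          occursAt_append_singleton_iff S hc, and_assoc]

theorem iter_countOccLabelLT {d : α} {rest : List α} (hd : d ∉ rest) (w : List α) (s t : ℕ) :
    iter S ℓ d w rest (countOccLabelLT S ℓ w s, countOccLabelLT S ℓ w t)
      = (countOccLabelLT S ℓ (w ++ rest) s, countOccLabelLT S ℓ (w ++ rest) t) := by
  induction rest generalizing w with
  | nil => simp [iter]
  | cons c rest ih =>
    rw [List.mem_cons, not_or] at hd
    rw [iter, rankc_Sw_countOccLabelLT S ℓ (Ne.symm hd.1),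
      rankc_Sw_countOccLabelLT S ℓ (Ne.symm hd.1), ih hd.2, List.append_assoc,
      List.singleton_append]

end Occurrences

/-- the count of occurrences of `P` with first label in `[a,b]` is computed by
`m` iterated rank computations: the length of the final interval `I_m` equals the count. -/
theorem stmt7 {α : Type*} [DecidableEq α] (S : List α) (ℓ : ℕ → ℕ) (d : α)
    (P : List α) (a b : ℕ) (hd : d ∉ P) :
    (iter S ℓ d [] P
        (((Finset.range S.length).filter (fun i => ℓ i < a)).card,
         ((Finset.range S.length).filter (fun i => ℓ i ≤ b)).card)).2
      - (iter S ℓ d [] P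
        (((Finset.range S.length).filter (fun i => ℓ i < a)).card,
         ((Finset.range S.length).filter (fun i => ℓ i ≤ b)).card)).1
      = ((Finset.range S.length).filter
          (fun i => occursAt S P i ∧ a ≤ ℓ i ∧ ℓ i ≤ b)).card := by
  have hlo : ((Finset.range S.length).filter (fun i => ℓ i < a)).card
      = countOccLabelLT S ℓ [] a := by
    rw [countOccLabelLT, occurrences_nil]
  have hhi : ((Finset.range S.length).filter (fun i => ℓ i ≤ b)).card
      = countOccLabelLT S ℓ [] (b + 1) := by
    simp only [countOccLabelLT, occurrences_nil, Nat.lt_succ_iff]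
  rw [hlo, hhi, iter_countOccLabelLT S ℓ hd, List.nil_append, countOccLabelLT, countOccLabelLT,
    Finset.card_filter_lt_sub_card_filter_lt, occurrences, Finset.filter_filter]
  simp only [Nat.lt_succ_iff]
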